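/- arXiv:1603.04818 — 3 statements merged into one kernel-verified Lean document; each statement's English description precedes it below -/
import Mathlib

section
/- Let μ be a doubling Borel measure on a metric space M (i.e. there exists C > 0 with μ(B(x,2r)) ≤ C μ(B(x,r)) for all x and r > 0, and μ is nonzero, locally finite). Then every porous subset E of M has μ-measure zero. -/
/-!
By the Lebesgue density theorem for doubling measures, almost every point of `E` is a density
point of `E`. At a point `a` of a porous set, the holes `B(xₙ, λ d(a, xₙ))` give closed balls of
radius `δₙ = λ d(a, xₙ) / 2 → 0` that miss `E` and whose `2 / λ`-dilates contain `a`, so the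
density of `E` along them is `0`. Hence `μ E = 0`.

The density theorem needs a separable space. A nonzero doubling measure charges every ball and is
finite on balls, so every `ε`-separated set is countable and a maximal one is a countable `ε`-net.
-/

open Filter Topology Metric Set MeasureTheory

/-- A set is porous with constant `lam ∈ (0,1)`: each of its points sees nearby
relatively large holes in the set. -/
def IsPorousSet {M : Type*} [MetricSpace M] (E : Set M) : Prop :=
  ∃ lam : ℝ, 0 < lam ∧ lam < 1 ∧ ∀ a ∈ E, ∃ x : ℕ → M, Tendsto x atTop (𝓝 a) ∧
    (∀ n, x n ≠ a) ∧ ∀ n, Metric.ball (x n) (lam * dist a (x n)) ∩ E = ∅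

open scoped NNReal ENNReal Function

theorem secondCountableTopology_of_isOpenPosMeasure {X : Type*} [MetricSpace X]
    [MeasurableSpace X] [OpensMeasurableSpace X] (μ : Measure X) [SFinite μ]
    [μ.IsOpenPosMeasure] : SecondCountableTopology X := by
  refine Metric.secondCountable_of_almost_dense_set fun ε hε => ?_
  obtain ⟨s, hs⟩ := zorn_subset {s : Set X | s.Pairwise fun x y => ε ≤ dist x y}
    fun c _ hc => ⟨⋃₀ c, hc.pairwise_sUnion.2 ‹_›, fun s hs => subset_sUnion_of_mem hs⟩
  refine ⟨s, ?_, fun x => ?_⟩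
  · -- the balls of radius `ε / 2` around the points of `s` are disjoint and of positive measure
    have hdisj : Pairwise (Disjoint on fun y : s => ball (y : X) (ε / 2)) := by
      intro y z hyz
      refine ball_disjoint_ball ?_
      have := hs.prop y.2 z.2 (Subtype.coe_ne_coe.2 hyz)
      linarith
    have := Measure.countable_meas_pos_of_disjoint_iUnion (μ := μ)
      (fun _ => measurableSet_ball) hdisj
    simp only [measure_ball_pos μ _ (half_pos hε), ofPred_true] at this
    exact countable_univ_iff.1 this
  · by_contra! hfar
    have hx : x ∉ s := fun hx => lt_asymm hε (by simpa using hfar x hx)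
    refine hx (hs.mem_of_prop_insert ?_)
    refine hs.prop.insert fun y hy _ => ⟨(hfar y hy).le, ?_⟩
    rw [dist_comm]; exact (hfar y hy).le

def IsBallDoubling {M : Type*} [MetricSpace M] [MeasurableSpace M] (μ : Measure M) (C : ℝ≥0) :
    Prop :=
  ∀ (x : M) (r : ℝ), 0 < r → μ (ball x (2 * r)) ≤ C * μ (ball x r)

namespace IsBallDoubling

variable {M : Type*} [MetricSpace M] [MeasurableSpace M] {μ : Measure M} {C : ℝ≥0}

theorem measure_ball_two_pow_mul_le (h : IsBallDoubling μ C) (k : ℕ) (x : M) {r : ℝ}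
    (hr : 0 < r) : μ (ball x (2 ^ k * r)) ≤ C ^ k * μ (ball x r) := by
  induction k with
  | zero => simp
  | succ k ih =>
    calc μ (ball x (2 ^ (k + 1) * r)) = μ (ball x (2 * (2 ^ k * r))) := by ring_nf
      _ ≤ C * μ (ball x (2 ^ k * r)) := h x _ (by positivity)
      _ ≤ C * (C ^ k * μ (ball x r)) := by gcongr
      _ = C ^ (k + 1) * μ (ball x r) := by ring

theorem exists_measure_ball_le (h : IsBallDoubling μ C) (x : M) {r : ℝ} (hr : 0 < r) (R : ℝ) :
    ∃ k : ℕ, μ (ball x R) ≤ C ^ k * μ (ball x r) := by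
  obtain ⟨k, hk⟩ := pow_unbounded_of_one_lt (R / r) one_lt_two
  refine ⟨k, (measure_mono (ball_subset_ball ?_)).trans (h.measure_ball_two_pow_mul_le k x hr)⟩
  exact ((div_lt_iff₀ hr).1 hk).le

theorem measure_ball_lt_top [IsLocallyFiniteMeasure μ] (h : IsBallDoubling μ C) (x : M) (R : ℝ) :
    μ (ball x R) < ∞ := by
  obtain ⟨r, hr, hfin⟩ := (μ.finiteAt_nhds x).exists_mem_basis nhds_basis_ball
  obtain ⟨k, hk⟩ := h.exists_measure_ball_le x hr R
  exact hk.trans_lt (ENNReal.mul_lt_top (by simp) hfin)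

theorem sigmaFinite [IsLocallyFiniteMeasure μ] (h : IsBallDoubling μ C) : SigmaFinite μ := by
  rcases isEmpty_or_nonempty M with _ | ⟨⟨x⟩⟩
  · infer_instance
  · refine Measure.sigmaFinite_of_countable (countable_range fun n : ℕ => ball x n) ?_ ?_
    · rintro _ ⟨n, rfl⟩
      exact h.measure_ball_lt_top x n
    · rw [sUnion_range, iUnion_ball_nat]

theorem isOpenPosMeasure (h : IsBallDoubling μ C) (hμ : μ ≠ 0) : μ.IsOpenPosMeasure := by
  refine ⟨fun U hU ⟨x, hx⟩ hUμ => hμ ?_⟩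
  obtain ⟨r, hr, hrU⟩ := Metric.isOpen_iff.1 hU x hx
  have hball : ∀ R, μ (ball x R) = 0 := fun R => by
    obtain ⟨k, hk⟩ := h.exists_measure_ball_le x hr R
    simpa [measure_mono_null hrU hUμ] using hk
  rw [← Measure.measure_univ_eq_zero, ← iUnion_ball_nat x]
  exact measure_iUnion_null fun n => hball n

theorem isUnifLocDoublingMeasure (h : IsBallDoubling μ C) : IsUnifLocDoublingMeasure μ := by
  refine ⟨C ^ 2, eventually_mem_nhdsWithin.mono fun ε (hε : 0 < ε) x => ?_⟩
  calc μ (closedBall x (2 * ε)) ≤ μ (ball x (2 ^ 2 * ε)) :=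
        measure_mono (closedBall_subset_ball (by linarith))
    _ ≤ C ^ 2 * μ (ball x ε) := h.measure_ball_two_pow_mul_le 2 x hε
    _ ≤ ↑(C ^ 2) * μ (closedBall x ε) := by push_cast; gcongr; exact ball_subset_closedBall

end IsBallDoubling

namespace IsPorousSet

variable {M : Type*} [MetricSpace M] {E : Set M}

theorem exists_closedBall_disjoint (hE : IsPorousSet E) :
    ∃ K : ℝ, ∀ a ∈ E, ∃ (w : ℕ → M) (δ : ℕ → ℝ), Tendsto δ atTop (𝓝[>] 0) ∧
      (∀ n, a ∈ closedBall (w n) (K * δ n)) ∧ ∀ n, Disjoint E (closedBall (w n) (δ n)) := by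
  obtain ⟨lam, hlam₀, hlam₁, hholes⟩ := hE
  refine ⟨2 / lam, fun a ha => ?_⟩
  obtain ⟨x, hxa, hxne, hx⟩ := hholes a ha
  have hdist : ∀ n, 0 < dist a (x n) := fun n => dist_pos.2 (hxne n).symm
  refine ⟨x, fun n => lam / 2 * dist a (x n), ?_, fun n => ?_, fun n => ?_⟩
  · refine tendsto_nhdsWithin_iff.2 ⟨?_, Eventually.of_forall fun n =>
      mul_pos (half_pos hlam₀) (hdist n)⟩
    simpa using ((tendsto_const_nhds (x := a)).dist hxa).const_mul (lam / 2)
  · have hK : 2 / lam * (lam / 2) = 1 := by field_simp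
    simp [mem_closedBall, ← mul_assoc, hK]
  · rw [disjoint_iff_inter_eq_empty, inter_comm, ← subset_empty_iff, ← hx n]
    gcongr
    exact closedBall_subset_ball (by nlinarith [hdist n])

theorem measure_eq_zero [MeasurableSpace M] [BorelSpace M] [SecondCountableTopology M]
    (μ : Measure M) [IsLocallyFiniteMeasure μ] [IsUnifLocDoublingMeasure μ]
    (hE : IsPorousSet E) : μ E = 0 := by
  obtain ⟨K, hK⟩ := hE.exists_closedBall_disjoint
  rw [← Measure.restrict_apply_self, measure_eq_zero_iff_ae_notMem]
  filter_upwards [IsUnifLocDoublingMeasure.ae_tendsto_measure_inter_div μ E K] with a ha haE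
  obtain ⟨w, δ, hδ, hmem, hdisj⟩ := hK a haE
  have hdensity := ha w δ hδ (Eventually.of_forall hmem)
  simp only [fun n => (hdisj n).inter_eq, measure_empty, ENNReal.zero_div] at hdensity
  exact zero_ne_one (tendsto_nhds_unique tendsto_const_nhds hdensity)

end IsPorousSet

theorem stmt_3_general {M : Type*} [MetricSpace M] [MeasurableSpace M] [BorelSpace M]
    (μ : Measure M) [IsLocallyFiniteMeasure μ] (hμ : μ ≠ 0)
    (C : NNReal)
    (hdoubling : ∀ (x : M) (r : ℝ), 0 < r → μ (Metric.ball x (2 * r)) ≤ (C : ENNReal) * μ (Metric.ball x r))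
    (E : Set M) (hE : IsPorousSet E) :
    μ E = 0 := by
  have h : IsBallDoubling μ C := hdoubling
  have := h.sigmaFinite
  have := h.isOpenPosMeasure hμ
  have := h.isUnifLocDoublingMeasure
  have := secondCountableTopology_of_isOpenPosMeasure μ
  exact hE.measure_eq_zero μ

theorem stmt_3 {M : Type*} [MetricSpace M] [MeasurableSpace M] [BorelSpace M]
    (μ : Measure M) [IsLocallyFiniteMeasure μ] (hμ : μ ≠ 0)
    (C : NNReal) (hC : 0 < C)
    (hdoubling : ∀ (x : M) (r : ℝ), 0 < r → μ (Metric.ball x (2 * r)) ≤ (C : ENNReal) * μ (Metric.ball x r))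
    (E : Set M) (hE : IsPorousSet E) :
    μ E = 0 :=
  stmt_3_general μ hμ C hdoubling E hE
end

section
/- Let μ be a doubling Borel measure on a metric space. Then every σ-porous set (countable union of porous sets) has μ-measure zero. -/
/-!
By the Lebesgue density theorem for doubling measures, almost every point of a set `E` is a
density point of `E`. A porous set has no density points: if `B(x, λ d(a, x))` misses `E`, then
`k` doublings of this hole cover the closed ball `B̄(x, d(a, x)) ∋ a`, so the hole carries at
least the fraction `C⁻ᵏ` of its measure and the relative density of `E` in these shrinking balls
stays at most `1 - C⁻ᵏ`.

The density theorem needs a second countable space. This also comes from doubling: disjoint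
balls of radius `ε / 2` centred in `B(x, r)` each carry a fixed fraction of `μ (B(x, r + ε))`,
so `ε`-separated subsets of `B(x, r)` are uniformly finite and balls are totally bounded.
-/

open Filter Topology Metric Set MeasureTheory

open scoped ENNReal NNReal
open TopologicalSpace

theorem exists_lt_two_pow_mul (R : ℝ) {r : ℝ} (hr : 0 < r) : ∃ k : ℕ, R < 2 ^ k * r := by
  obtain ⟨k, hk⟩ := pow_unbounded_of_one_lt (R / r) one_lt_two
  exact ⟨k, (div_lt_iff₀ hr).1 hk⟩

theorem measure_inter_div_le_one_sub_inv {α : Type*} [MeasurableSpace α] {μ : Measure α}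
    {E B H : Set α} {K : ℝ≥0∞} (hHB : H ⊆ B) (hH : MeasurableSet H) (hEH : Disjoint E H)
    (hBH : μ B ≤ K * μ H) : μ (E ∩ B) / μ B ≤ 1 - K⁻¹ := by
  rcases eq_or_ne (μ B) 0 with hB0 | hB0
  · simp [hB0, measure_mono_null inter_subset_right hB0]
  rcases eq_or_ne (μ B) ∞ with hBtop | hBtop
  · simp [hBtop]
  have hK : K ≠ 0 := by rintro rfl; simp_all
  have hsplit : μ (E ∩ B) + μ H ≤ μ B := by
    rw [← measure_union (hEH.mono_left inter_subset_left) hH]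
    exact measure_mono (union_subset inter_subset_right hHB)
  have hKinv : K⁻¹ ≤ μ H / μ B := by
    rw [ENNReal.le_div_iff_mul_le (Or.inl hB0) (Or.inl hBtop), ← ENNReal.div_eq_inv_mul]
    exact ENNReal.div_le_of_le_mul' hBH
  refine ENNReal.le_sub_of_add_le_right (ENNReal.inv_ne_top.2 hK) ?_
  calc μ (E ∩ B) / μ B + K⁻¹ ≤ μ (E ∩ B) / μ B + μ H / μ B := by gcongr
    _ = (μ (E ∩ B) + μ H) / μ B := ENNReal.div_add_div_same
    _ ≤ μ B / μ B := by gcongr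
    _ ≤ 1 := ENNReal.div_self_le_one

def IsDoublingMeasureWith {M : Type*} [MetricSpace M] [MeasurableSpace M] (μ : Measure M)
    (C : ℝ≥0) : Prop :=
  ∀ (x : M) (r : ℝ), 0 < r → μ (ball x (2 * r)) ≤ C * μ (ball x r)

namespace IsDoublingMeasureWith

variable {M : Type*} [MetricSpace M] [MeasurableSpace M] {μ : Measure M} {C : ℝ≥0}

theorem measure_ball_le_pow_mul (h : IsDoublingMeasureWith μ C) (x : M) (k : ℕ) {r R : ℝ}
    (hr : 0 < r) (hR : R ≤ 2 ^ k * r) : μ (ball x R) ≤ C ^ k * μ (ball x r) := by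
  refine (measure_mono (ball_subset_ball hR)).trans ?_
  clear hR
  induction k with
  | zero => simp
  | succ k ih =>
    calc μ (ball x (2 ^ (k + 1) * r)) = μ (ball x (2 * (2 ^ k * r))) := by ring_nf
      _ ≤ C * μ (ball x (2 ^ k * r)) := h x _ (by positivity)
      _ ≤ C * (C ^ k * μ (ball x r)) := by gcongr
      _ = C ^ (k + 1) * μ (ball x r) := by ring

theorem measure_closedBall_le_pow_mul (h : IsDoublingMeasureWith μ C) (x : M) (k : ℕ)
    {r R : ℝ} (hr : 0 < r) (hR : R < 2 ^ k * r) : μ (closedBall x R) ≤ C ^ k * μ (ball x r) :=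
  (measure_mono (closedBall_subset_ball hR)).trans (h.measure_ball_le_pow_mul x k hr le_rfl)

theorem measure_ball_lt_top [IsLocallyFiniteMeasure μ] (h : IsDoublingMeasureWith μ C) (x : M)
    (R : ℝ) : μ (ball x R) < ∞ := by
  obtain ⟨s, hs, hμs⟩ := μ.finiteAt_nhds x
  obtain ⟨r, hr, hrs⟩ := Metric.mem_nhds_iff.1 hs
  obtain ⟨k, hk⟩ := exists_lt_two_pow_mul R hr
  calc μ (ball x R) ≤ C ^ k * μ (ball x r) := h.measure_ball_le_pow_mul x k hr hk.le
    _ ≤ C ^ k * μ s := by gcongr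
    _ < ∞ := ENNReal.mul_lt_top (by simp) hμs

theorem measure_ball_pos (h : IsDoublingMeasureWith μ C) (hμ : μ ≠ 0) (x : M) {r : ℝ}
    (hr : 0 < r) : 0 < μ (ball x r) := by
  refine pos_iff_ne_zero.2 fun hr0 => hμ ?_
  have hnull (n : ℕ) : μ (ball x n) = 0 := by
    obtain ⟨k, hk⟩ := exists_lt_two_pow_mul n hr
    simpa [hr0] using h.measure_ball_le_pow_mul x k hr hk.le
  rw [← Measure.measure_univ_eq_zero, ← iUnion_ball_nat x]
  exact measure_iUnion_null hnull

theorem encard_le_of_isSeparated [OpensMeasurableSpace M] [IsLocallyFiniteMeasure μ]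
    (h : IsDoublingMeasureWith μ C) (hμ : μ ≠ 0) {x : M} {r : ℝ} {ε : ℝ≥0} (hε : 0 < ε)
    {k : ℕ} (hk : 2 * r + ε ≤ 2 ^ k * (ε / 2)) {D : Set M} (hDc : D.Countable)
    (hD : D ⊆ ball x r) (hsep : IsSeparated ε D) : (D.encard : ℝ≥0∞) ≤ C ^ k := by
  rcases D.eq_empty_or_nonempty with rfl | ⟨y, hy⟩
  · simp
  have hr : 0 < r := pos_of_mem_ball (hD hy)
  set m := μ (ball x (r + ε))
  have hm_pos : m ≠ 0 := (h.measure_ball_pos hμ x (by positivity)).ne'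
  have hm_top : m ≠ ∞ := (h.measure_ball_lt_top x _).ne
  have hm_le (y : M) (hy : y ∈ D) : m ≤ C ^ k * μ (ball y (ε / 2)) := by
    refine (measure_mono fun z hz => ?_).trans (h.measure_ball_le_pow_mul y k (by positivity) hk)
    have := mem_ball.1 (hD hy)
    rw [mem_ball] at hz ⊢
    linarith [dist_triangle z x y, dist_comm x y]
  have hdisj : D.PairwiseDisjoint fun y => ball y (ε / 2) := fun y hy z hz hyz =>
    ball_disjoint_ball <| by
      have : (ε : ℝ≥0∞) < edist y z := hsep hy hz hyz
      rw [edist_nndist, ENNReal.coe_lt_coe, ← NNReal.coe_lt_coe, coe_nndist] at this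
      linarith
  have hunion : (⋃ y ∈ D, ball y (ε / 2)) ⊆ ball x (r + ε) := by
    refine iUnion₂_subset fun y hy z hz => ?_
    have := mem_ball.1 (hD hy)
    rw [mem_ball] at hz ⊢
    linarith [dist_triangle z y x]
  refine (ENNReal.mul_le_mul_iff_left hm_pos hm_top).1 ?_
  calc (D.encard : ℝ≥0∞) * m = ∑' _ : D, m := (ENNReal.tsum_const m).symm
    _ ≤ ∑' y : D, C ^ k * μ (ball y (ε / 2)) := ENNReal.tsum_le_tsum fun y => hm_le y y.2
    _ = C ^ k * μ (⋃ y ∈ D, ball y (ε / 2)) := by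
      rw [ENNReal.tsum_mul_left, measure_biUnion hDc hdisj fun _ _ => measurableSet_ball]
    _ ≤ C ^ k * m := by gcongr; exact measure_mono hunion

theorem packingNumber_ball_ne_top [OpensMeasurableSpace M] [IsLocallyFiniteMeasure μ]
    (h : IsDoublingMeasureWith μ C) (hμ : μ ≠ 0) (x : M) (r : ℝ) {ε : ℝ≥0} (hε : 0 < ε) :
    packingNumber ε (ball x r) ≠ ⊤ := by
  obtain ⟨k, hk⟩ := exists_lt_two_pow_mul (2 * r + ε) (half_pos (NNReal.coe_pos.2 hε))
  obtain ⟨N, hN⟩ := ENNReal.exists_nat_gt (by simp : (C : ℝ≥0∞) ^ k ≠ ∞)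
  refine ne_top_of_le_ne_top (ENat.natCast_ne_top N)
    (iSup₂_le fun D hD => iSup_le fun hsep => ?_)
  by_contra! hND
  obtain ⟨D', hD'D, hD'⟩ := Set.exists_subset_encard_eq (Order.add_one_le_of_lt hND)
  have hD'c : D'.Countable := (Set.encard_ne_top_iff.1 (by simp [hD'])).countable
  have := h.encard_le_of_isSeparated hμ hε hk.le hD'c (hD'D.trans hD) (hsep.subset hD'D)
  rw [hD'] at this
  push_cast at this
  exact absurd (this.trans_lt hN) (by simp)

theorem totallyBounded_ball [OpensMeasurableSpace M] [IsLocallyFiniteMeasure μ]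
    (h : IsDoublingMeasureWith μ C) (hμ : μ ≠ 0) (x : M) (r : ℝ) :
    TotallyBounded (ball x r) := by
  refine Metric.totallyBounded_iff.2 fun ε hε => ?_
  set δ := (ε / 2).toNNReal
  have hδ := h.packingNumber_ball_ne_top hμ x r (ε := δ) (Real.toNNReal_pos.2 (by positivity))
  refine ⟨maximalSeparatedSet δ (ball x r), ?_, ?_⟩
  · exact Set.encard_ne_top_iff.1 (by rwa [encard_maximalSeparatedSet hδ])
  · refine (isCover_maximalSeparatedSet hδ).subset_iUnion_closedBall.trans
      (iUnion₂_mono fun y _ => closedBall_subset_ball ?_)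
    rw [Real.coe_toNNReal _ (by positivity)]
    linarith

theorem secondCountableTopology [OpensMeasurableSpace M] [IsLocallyFiniteMeasure μ]
    (h : IsDoublingMeasureWith μ C) (hμ : μ ≠ 0) : SecondCountableTopology M := by
  obtain ⟨x⟩ : Nonempty M := by
    by_contra hM
    rw [not_nonempty_iff] at hM
    exact hμ μ.eq_zero_of_isEmpty
  have : SeparableSpace M := isSeparable_univ_iff.1 <| by
    rw [← iUnion_ball_nat x]
    exact .iUnion fun n => (h.totallyBounded_ball hμ x n).isSeparable
  exact UniformSpace.secondCountable_of_separable M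

theorem isUnifLocDoublingMeasure (h : IsDoublingMeasureWith μ C) :
    IsUnifLocDoublingMeasure μ := by
  refine ⟨⟨C ^ 2, ?_⟩⟩
  filter_upwards [self_mem_nhdsWithin] with ε (hε : 0 < ε) x
  calc μ (closedBall x (2 * ε)) ≤ C ^ 2 * μ (ball x ε) :=
        h.measure_closedBall_le_pow_mul x 2 hε (by linarith)
    _ ≤ C ^ 2 * μ (closedBall x ε) := by gcongr; exact ball_subset_closedBall
    _ = ((C ^ 2 : ℝ≥0) : ℝ≥0∞) * μ (closedBall x ε) := by push_cast; rfl

theorem measure_inter_closedBall_div_le [OpensMeasurableSpace M] (h : IsDoublingMeasureWith μ C)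
    {E : Set M} {y : M} {d lam : ℝ} {k : ℕ} (hlam : 0 < lam) (hlam1 : lam ≤ 1)
    (hk : 1 < 2 ^ k * lam) (hd : 0 < d) (hole : ball y (lam * d) ∩ E = ∅) :
    μ (E ∩ closedBall y d) / μ (closedBall y d) ≤ 1 - ((C : ℝ≥0∞) ^ k)⁻¹ :=
  measure_inter_div_le_one_sub_inv (H := ball y (lam * d))
    ((ball_subset_ball (by nlinarith)).trans ball_subset_closedBall) measurableSet_ball
    (disjoint_iff_inter_eq_empty.2 (by rwa [inter_comm]))
    (h.measure_closedBall_le_pow_mul y k (by positivity) (by nlinarith))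

end IsDoublingMeasureWith

theorem IsPorousSet.measure_eq_zero_s4 {M : Type*} [MetricSpace M] [MeasurableSpace M]
    [BorelSpace M] [SecondCountableTopology M] {μ : Measure M} [IsLocallyFiniteMeasure μ]
    {C : ℝ≥0} (h : IsDoublingMeasureWith μ C) {E : Set M} (hE : IsPorousSet E) : μ E = 0 := by
  have := h.isUnifLocDoublingMeasure
  obtain ⟨lam, hlam, hlam1, hpor⟩ := hE
  obtain ⟨k, hk⟩ := exists_lt_two_pow_mul 1 hlam
  have hc : 1 - ((C : ℝ≥0∞) ^ k)⁻¹ < 1 :=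
    ENNReal.sub_lt_self ENNReal.one_ne_top one_ne_zero (by simp)
  have hdens := IsUnifLocDoublingMeasure.ae_tendsto_measure_inter_div μ E 1
  -- `E` need not be measurable: `μ E = μ.restrict E E`, and the density statement holds
  -- `μ.restrict E`-a.e., so it suffices that it fails at every point of `E`.
  rw [← Measure.restrict_apply_self]
  refine measure_mono_null (fun a ha => ?_) (ae_iff.1 hdens)
  intro hdens_a
  obtain ⟨x, hxa, hxa_ne, hhole⟩ := hpor a ha
  have hd : Tendsto (fun n => dist a (x n)) atTop (𝓝[>] 0) :=
    tendsto_nhdsWithin_iff.2 ⟨by simpa using (tendsto_const_nhds (x := a)).dist hxa,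
      Eventually.of_forall fun n => dist_pos.2 (hxa_ne n).symm⟩
  have hlim := hdens_a x _ hd (Eventually.of_forall fun n => by
    rw [one_mul, mem_closedBall, dist_comm])
  refine (le_of_tendsto hlim (Eventually.of_forall fun n => ?_)).not_gt hc
  exact h.measure_inter_closedBall_div_le hlam hlam1.le hk
    (dist_pos.2 (hxa_ne n).symm) (hhole n)

theorem stmt_4_general {M : Type*} [MetricSpace M] [MeasurableSpace M] [BorelSpace M]
    (μ : Measure M) [IsLocallyFiniteMeasure μ] (hμ : μ ≠ 0)
    (C : NNReal)
    (hdoubling : ∀ (x : M) (r : ℝ), 0 < r →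
      μ (Metric.ball x (2 * r)) ≤ (C : ENNReal) * μ (Metric.ball x r))
    (E : ℕ → Set M) (hE : ∀ n, IsPorousSet (E n)) :
    μ (⋃ n, E n) = 0 := by
  have := IsDoublingMeasureWith.secondCountableTopology hdoubling hμ
  exact measure_iUnion_null fun n => (hE n).measure_eq_zero_s4 hdoubling

theorem stmt_4 {M : Type*} [MetricSpace M] [MeasurableSpace M] [BorelSpace M]
    (μ : Measure M) [IsLocallyFiniteMeasure μ] (hμ : μ ≠ 0)
    (C : NNReal) (hC : 0 < C)
    (hdoubling : ∀ (x : M) (r : ℝ), 0 < r →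
      μ (Metric.ball x (2 * r)) ≤ (C : ENNReal) * μ (Metric.ball x r))
    (E : ℕ → Set M) (hE : ∀ n, IsPorousSet (E n)) :
    μ (⋃ n, E n) = 0 :=
  stmt_4_general μ hμ C hdoubling E hE
end

section
/- Let f : ℝⁿ → ℝ be Lipschitz and let x ∈ ℝⁿ be a point such that: (i) all partial derivatives ∂f/∂xᵢ(x) exist for 1 ≤ i ≤ n; (ii) directional derivatives act linearly at x (whenever f'(x,u) and f'(x,v) exist, f'(x,u+v) exists and equals their sum, and f'(x,su) = s f'(x,u)); and (iii) x is a regular point of f, i.e. for every v such that f'(x,v) exists, (f(x+tu+tv) − f(x+tu))/t → f'(x,v) as t → 0 uniformly over u in the closed unit ball. Then f is (Fréchet) differentiable at x with derivative h ↦ ⟨h, ∇f(x)⟩. -/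
open Filter Topology Metric Set

/-- Two-sided directional derivative of `f` at `x` in direction `v`. -/
def HasDirDeriv {n : ℕ} (f : EuclideanSpace ℝ (Fin n) → ℝ)
    (x v : EuclideanSpace ℝ (Fin n)) (L : ℝ) : Prop :=
  Tendsto (fun t : ℝ => (f (x + t • v) - f x) / t) (𝓝[≠] (0 : ℝ)) (𝓝 L)

/-- `(f(x+tu+tv) − f(x+tu))/t → L` as `t → 0`, uniformly over `u` in the closed
unit ball. -/
def UniformDirConv {n : ℕ} (f : EuclideanSpace ℝ (Fin n) → ℝ)
    (x v : EuclideanSpace ℝ (Fin n)) (L : ℝ) : Prop :=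
  ∀ ε : ℝ, 0 < ε → ∃ δ : ℝ, 0 < δ ∧ ∀ t : ℝ, t ≠ 0 → |t| < δ →
    ∀ u : EuclideanSpace ℝ (Fin n), ‖u‖ ≤ 1 →
      |(f (x + t • u + t • v) - f (x + t • u)) / t - L| ≤ ε

/-! A Lipschitz function whose directional derivatives at `x` are given by a continuous linear map
`L` is Fréchet differentiable there with derivative `L`: the difference quotients converge on a
finite net of the unit sphere, and the Lipschitz bound spreads this uniformly to all nearby
directions. Additivity and homogeneity of the directional derivatives identify them with
`v ↦ ∑ i, v i * ∂ᵢf(x)`. -/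

section

variable {n : ℕ} {f : EuclideanSpace ℝ (Fin n) → ℝ} {x : EuclideanSpace ℝ (Fin n)}

theorem hasDirDeriv_iff_hasLineDerivAt {v : EuclideanSpace ℝ (Fin n)} {L : ℝ} :
    HasDirDeriv f x v L ↔ HasLineDerivAt ℝ f L x v := by
  simp only [HasDirDeriv, hasLineDerivAt_iff_tendsto_slope_zero, smul_eq_mul, div_eq_inv_mul]

theorem hasDirDeriv_zero : HasDirDeriv f x 0 0 := by
  simp [HasDirDeriv]

theorem hasDirDeriv_finset_sum {ι : Type*} (s : Finset ι) (e : ι → EuclideanSpace ℝ (Fin n))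
    (c D : ι → ℝ) (he : ∀ i ∈ s, HasDirDeriv f x (e i) (D i))
    (hadd : ∀ (u v : EuclideanSpace ℝ (Fin n)) (Lu Lv : ℝ),
      HasDirDeriv f x u Lu → HasDirDeriv f x v Lv → HasDirDeriv f x (u + v) (Lu + Lv))
    (hsmul : ∀ (u : EuclideanSpace ℝ (Fin n)) (L : ℝ) (a : ℝ),
      HasDirDeriv f x u L → HasDirDeriv f x (a • u) (a * L)) :
    HasDirDeriv f x (∑ i ∈ s, c i • e i) (∑ i ∈ s, c i * D i) := by
  classical
  induction s using Finset.induction_on with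
  | empty => simpa using hasDirDeriv_zero
  | insert a s ha ih =>
    rw [Finset.sum_insert ha, Finset.sum_insert ha]
    exact hadd _ _ _ _ (hsmul _ _ _ (he a (s.mem_insert_self a)))
      (ih fun i hi => he i (Finset.mem_insert_of_mem hi))

end

theorem stmt_12_general {n : ℕ} (f : EuclideanSpace ℝ (Fin n) → ℝ) (K : NNReal)
    (hf : LipschitzWith K f) (x : EuclideanSpace ℝ (Fin n))
    (g : Fin n → ℝ)
    (hpartial : ∀ i : Fin n, HasDirDeriv f x (EuclideanSpace.single i (1 : ℝ)) (g i))
    (hadd : ∀ (u v : EuclideanSpace ℝ (Fin n)) (Lu Lv : ℝ),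
      HasDirDeriv f x u Lu → HasDirDeriv f x v Lv → HasDirDeriv f x (u + v) (Lu + Lv))
    (hsmul : ∀ (u : EuclideanSpace ℝ (Fin n)) (L : ℝ) (s : ℝ),
      HasDirDeriv f x u L → HasDirDeriv f x (s • u) (s * L)) :
    HasFDerivAt f (∑ i : Fin n, g i • (EuclideanSpace.proj i : EuclideanSpace ℝ (Fin n) →L[ℝ] ℝ)) x := by
  refine hf.hasFDerivAt_of_hasLineDerivAt_of_closure (s := univ) (by simp) fun v _ => ?_
  rw [← hasDirDeriv_iff_hasLineDerivAt]
  have hv : ∑ i, v i • EuclideanSpace.single i (1 : ℝ) = v := by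
    simpa [EuclideanSpace.basisFun_apply] using (EuclideanSpace.basisFun (Fin n) ℝ).sum_repr v
  have hsum := hasDirDeriv_finset_sum Finset.univ _ (fun i => v i) g
    (fun i _ => hpartial i) hadd hsmul
  rw [hv] at hsum
  simpa [mul_comm] using hsum

theorem stmt_12 {n : ℕ} (f : EuclideanSpace ℝ (Fin n) → ℝ) (K : NNReal)
    (hf : LipschitzWith K f) (x : EuclideanSpace ℝ (Fin n))
    (g : Fin n → ℝ)
    (hpartial : ∀ i : Fin n, HasDirDeriv f x (EuclideanSpace.single i (1 : ℝ)) (g i))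
    (hadd : ∀ (u v : EuclideanSpace ℝ (Fin n)) (Lu Lv : ℝ),
      HasDirDeriv f x u Lu → HasDirDeriv f x v Lv → HasDirDeriv f x (u + v) (Lu + Lv))
    (hsmul : ∀ (u : EuclideanSpace ℝ (Fin n)) (L : ℝ) (s : ℝ),
      HasDirDeriv f x u L → HasDirDeriv f x (s • u) (s * L))
    (hreg : ∀ (v : EuclideanSpace ℝ (Fin n)) (L : ℝ),
      HasDirDeriv f x v L → UniformDirConv f x v L) :
    HasFDerivAt f (∑ i : Fin n, g i • (EuclideanSpace.proj i : EuclideanSpace ℝ (Fin n) →L[ℝ] ℝ)) x :=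
  stmt_12_general f K hf x g hpartial hadd hsmul
end
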